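/- arXiv:2409.04894 — 4 statements merged into one kernel-verified Lean document; each statement's English description precedes it below -/
import Mathlib

section
/- Let A be a meet-semilattice and κ an infinite regular cardinal. The following are equivalent: (1) the complete lattice DM A is κJD (every κ-join in DM A is a distributive join); (2) DM A is a κ-frame; (3) BL_κ(DM A) = DM A, i.e., the set of normal ideals of A is closed under κ-joins computed in BL A. -/
open Cardinal

section Defs

variable {A : Type*} [SemilatticeInf A]

/-- `S ⊆ A` is admissible, with distributive join `x`: the join of `S` is `x` and
for every `a`, `a ⊓ x` is the join of `{a ⊓ s : s ∈ S}`. -/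
def IsDistJoin (S : Set A) (x : A) : Prop :=
  IsLUB S x ∧ ∀ a : A, IsLUB ((fun s => a ⊓ s) '' S) (a ⊓ x)

/-- A D-ideal of the meet-semilattice `A`: a downset closed under joins of
admissible subsets. -/
def IsDIdeal (E : Set A) : Prop :=
  IsLowerSet E ∧ ∀ S : Set A, S ⊆ E → ∀ x : A, IsDistJoin S x → x ∈ E

/-- `J` is the join of the family `T` in the Bruns–Lakser completion `BL A`:
the least D-ideal containing `⋃₀ T`. -/
def IsBLJoin (T : Set (Set A)) (J : Set A) : Prop :=
  IsDIdeal J ∧ ⋃₀ T ⊆ J ∧ ∀ E : Set A, IsDIdeal E → ⋃₀ T ⊆ E → J ⊆ E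

/-- A family of D-ideals closed under finite meets (intersections, including the
top `Set.univ` of `BL A`) and under κ-joins computed in `BL A`. -/
def BLClosed (κ : Cardinal) (C : Set (Set A)) : Prop :=
  Set.univ ∈ C ∧ (∀ E ∈ C, ∀ F ∈ C, E ∩ F ∈ C) ∧
    ∀ T : Set (Set A), T ⊆ C → #T < κ → ∀ J : Set A, IsBLJoin T J → J ∈ C

/-- The sub-κ-frame of `BL A` generated by `G`: the smallest subset of `BL A`
containing `G` and closed under finite meets and κ-joins computed in `BL A`. -/
def BLKappa (κ : Cardinal) (G : Set (Set A)) : Set (Set A) :=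
  ⋂₀ {C : Set (Set A) | G ⊆ C ∧ C ⊆ {E : Set A | IsDIdeal E} ∧ BLClosed κ C}

/-- A normal ideal: a downset `N` with `N = Nᵘˡ`. -/
def IsNormalIdeal (N : Set A) : Prop :=
  IsLowerSet N ∧ N = lowerBounds (upperBounds N)

/-- The relative annihilator `⟨a,b⟩ = {x : a ⊓ x ≤ b}`. -/
def RelAnn (a b : A) : Set A := {x : A | a ⊓ x ≤ b}

end Defs

/-- κ-completeness: every κ-join exists. -/
def IsKappaComplete (A : Type*) [Preorder A] (κ : Cardinal) : Prop :=
  ∀ S : Set A, #S < κ → ∃ x : A, IsLUB S x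

/-- κJD: every existing κ-join is a distributive join. -/
def IsKappaJD (A : Type*) [SemilatticeInf A] (κ : Cardinal) : Prop :=
  ∀ S : Set A, #S < κ → ∀ x : A, IsLUB S x → IsDistJoin S x

/-- A κ-frame: a κ-complete and κJD meet-semilattice. -/
def IsKappaFrame (A : Type*) [SemilatticeInf A] (κ : Cardinal) : Prop :=
  IsKappaComplete A κ ∧ IsKappaJD A κ

/-- A family of subsets of `α` closed under binary intersections is a
meet-semilattice in the inherited (inclusion) order, meets being intersections. -/
def subSemilatticeInf {α : Type*} (B : Set (Set α))
    (hmeet : ∀ E ∈ B, ∀ F ∈ B, E ∩ F ∈ B) : SemilatticeInf ↥B :=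
  { (inferInstance : PartialOrder ↥B) with
    inf := fun E F => ⟨E.1 ∩ F.1, hmeet _ E.2 _ F.2⟩
    inf_le_left := fun _ _ _ hx => hx.1
    inf_le_right := fun _ _ _ hx => hx.2
    le_inf := fun _ _ _ h1 h2 _ hx => ⟨h1 hx, h2 hx⟩ }

theorem isNormalIdeal_inter {A : Type*} [SemilatticeInf A] {N M : Set A}
    (hN : IsNormalIdeal N) (hM : IsNormalIdeal M) : IsNormalIdeal (N ∩ M) := by
  refine ⟨hN.1.inter hM.1, subset_antisymm (fun x hx u hu => hu hx) fun x hx => ?_⟩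
  constructor
  · have : x ∈ lowerBounds (upperBounds N) := fun u hu =>
      hx (upperBounds_mono_set Set.inter_subset_left hu)
    rwa [← hN.2] at this
  · have : x ∈ lowerBounds (upperBounds M) := fun u hu =>
      hx (upperBounds_mono_set Set.inter_subset_right hu)
    rwa [← hM.2] at this

/-- The Dedekind–MacNeille completion `DM A`: the normal ideals of `A` ordered by
inclusion. -/
abbrev DM (A : Type*) [SemilatticeInf A] := {N : Set A // IsNormalIdeal N}

/-- `DM A` is a meet-semilattice, with finite meets given by intersections. -/
instance (A : Type*) [SemilatticeInf A] : SemilatticeInf (DM A) :=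
  { (inferInstance : PartialOrder (DM A)) with
    inf := fun N M => ⟨N.1 ∩ M.1, isNormalIdeal_inter N.2 M.2⟩
    inf_le_left := fun _ _ _ hx => hx.1
    inf_le_right := fun _ _ _ hx => hx.2
    le_inf := fun _ _ _ h1 h2 _ hx => ⟨h1 hx, h2 hx⟩ }

section Aux

variable {A : Type*} [SemilatticeInf A]

lemma subset_ulbounds (X : Set A) : X ⊆ lowerBounds (upperBounds X) :=
  fun _ hx _ hu => hu hx

lemma isNormalIdeal_ul (X : Set A) :
    IsNormalIdeal (lowerBounds (upperBounds X)) := by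
  refine ⟨fun x y hyx hx u hu => le_trans hyx (hx hu),
    subset_antisymm (subset_ulbounds _) ?_⟩
  exact fun x hx u hu => hx fun y hy => hy hu

lemma isNormalIdeal_Iic (x : A) : IsNormalIdeal (Set.Iic x) := by
  refine ⟨fun a b h ha => h.trans ha, subset_antisymm (subset_ulbounds _) ?_⟩
  exact fun y hy => hy (fun z hz => hz)

lemma IsNormalIdeal.isDIdeal {N : Set A} (h : IsNormalIdeal N) : IsDIdeal N := by
  refine ⟨h.1, fun S hS x hx => ?_⟩
  rw [h.2]
  exact fun u hu => hx.1.2 fun s hs => hu (hS hs)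

lemma isNormalIdeal_univ [OrderTop A] : IsNormalIdeal (Set.univ : Set A) := by
  refine ⟨fun _ _ _ _ => trivial, subset_antisymm (subset_ulbounds _) (fun _ _ => trivial)⟩

lemma exists_isBLJoin (T : Set (Set A)) : ∃ J, IsBLJoin T J := by
  refine ⟨⋂₀ {E | IsDIdeal E ∧ ⋃₀ T ⊆ E}, ⟨⟨?_, ?_⟩, ?_, ?_⟩⟩
  · intro a b h ha E hE
    exact hE.1.1 h (ha E hE)
  · intro S hS x hx E hE
    exact hE.1.2 S (fun s hs => hS hs E hE) x hx
  · intro x hx E hE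
    exact hE.2 hx
  · intro E hE hsub x hx
    exact hx E ⟨hE, hsub⟩

/-- Frame distributivity in `BL A`. -/
lemma blJoin_inf {E : Set A} (hE : IsDIdeal E) {T : Set (Set A)}
    (hT : ∀ N ∈ T, IsLowerSet N) {J : Set A} (hJ : IsBLJoin T J)
    {F : Set A} (hF : IsDIdeal F) (hEF : ∀ N ∈ T, E ∩ N ⊆ F) :
    E ∩ J ⊆ F := by
  set K := {y : A | ∀ e ∈ E, e ⊓ y ∈ F} with hK
  have hKD : IsDIdeal K := by
    constructor
    · intro a b h ha e he
      exact hF.1 (inf_le_inf_left e h) (ha e he)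
    · intro S hS z hz e he
      refine hF.2 ((fun s => e ⊓ s) '' S) ?_ (e ⊓ z) ⟨hz.2 e, ?_⟩
      · rintro _ ⟨s, hs, rfl⟩
        exact hS hs e he
      · intro a
        have h2 := hz.2 (a ⊓ e)
        have himg : (fun s => a ⊓ s) '' ((fun s => e ⊓ s) '' S)
            = (fun s => (a ⊓ e) ⊓ s) '' S := by
          rw [Set.image_image]; simp [inf_assoc]
        rw [himg, ← inf_assoc]
        exact h2
  have hTK : ⋃₀ T ⊆ K := by
    rintro n ⟨N, hN, hn⟩ e he
    exact hEF N hN ⟨hE.1 inf_le_left he, (hT N hN) inf_le_right hn⟩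
  have hJK := hJ.2.2 K hKD hTK
  rintro x ⟨hxE, hxJ⟩
  have := hJK hxJ x hxE
  simpa using this

lemma isLUB_DM (S : Set (DM A)) :
    IsLUB S ⟨lowerBounds (upperBounds (⋃₀ (Subtype.val '' S))), isNormalIdeal_ul _⟩ := by
  constructor
  · intro N hN x hx
    exact subset_ulbounds _ ⟨N.val, ⟨N, hN, rfl⟩, hx⟩
  · intro b hb x hx
    have h1 : ⋃₀ (Subtype.val '' S) ⊆ b.val := by
      rintro y ⟨_, ⟨N, hN, rfl⟩, hy⟩
      exact hb hN hy
    have hx' : x ∈ lowerBounds (upperBounds b.val) :=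
      fun u hu => hx fun y hy => hu (h1 hy)
    show x ∈ b.val
    rw [b.2.2]
    exact hx'

lemma blJoin_normal_of_kappaJD {κ : Cardinal}
    (h : IsKappaJD (DM A) κ) {T : Set (Set A)} (hT : T ⊆ {N | IsNormalIdeal N})
    (hcard : Cardinal.mk T < κ) {J : Set A} (hJ : IsBLJoin T J) : IsNormalIdeal J := by
  set M : Set A := lowerBounds (upperBounds (⋃₀ T)) with hMdef
  set T' : Set (DM A) := {N : DM A | N.val ∈ T} with hT'def
  have hUeq : ⋃₀ (Subtype.val '' T') = ⋃₀ T := by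
    apply subset_antisymm
    · rintro x ⟨_, ⟨N, hN, rfl⟩, hx⟩
      exact ⟨N.val, hN, hx⟩
    · rintro x ⟨N, hN, hx⟩
      exact ⟨N, ⟨⟨N, hT hN⟩, hN, rfl⟩, hx⟩
  have hMlub : IsLUB T' ⟨M, isNormalIdeal_ul _⟩ := by
    have h1 := isLUB_DM T'
    have h2 : (⟨lowerBounds (upperBounds (⋃₀ (Subtype.val '' T'))), isNormalIdeal_ul _⟩ : DM A)
        = ⟨M, isNormalIdeal_ul _⟩ := Subtype.ext (by rw [hUeq])
    rwa [h2] at h1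
  have hcard' : Cardinal.mk T' < κ := by
    refine lt_of_le_of_lt (Cardinal.mk_le_of_injective
      (f := fun N : T' => (⟨N.1.1, N.2⟩ : T)) ?_) hcard
    intro a b hab
    have h5 := congrArg Subtype.val hab
    exact Subtype.ext (Subtype.ext h5)
  have hdist := h T' hcard' _ hMlub
  have key : ∀ z : A, z ∈ M → z ∈ lowerBounds (upperBounds (Set.Iic z ∩ ⋃₀ T)) := by
    intro z hz
    have hdist2 := hdist.2 ⟨Set.Iic z, isNormalIdeal_Iic z⟩
    have hb : (⟨lowerBounds (upperBounds (Set.Iic z ∩ ⋃₀ T)), isNormalIdeal_ul _⟩ : DM A)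
        ∈ upperBounds ((fun N => (⟨Set.Iic z, isNormalIdeal_Iic z⟩ : DM A) ⊓ N) '' T') := by
      rintro _ ⟨N, hN, rfl⟩ y hy
      exact subset_ulbounds _ ⟨hy.1, N.val, hN, hy.2⟩
    have h3 := hdist2.2 hb
    exact h3 ⟨Set.mem_Iic.2 le_rfl, hz⟩
  have hJM : J ⊆ M := hJ.2.2 M (isNormalIdeal_ul _).isDIdeal (subset_ulbounds _)
  have hMJ : M ⊆ J := by
    intro x hx
    refine hJ.1.2 (Set.Iic x ∩ ⋃₀ T) (fun s hs => hJ.2.1 hs.2) x ⟨⟨fun s hs => hs.1, key x hx⟩, ?_⟩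
    intro a
    constructor
    · rintro _ ⟨s, hs, rfl⟩
      exact inf_le_inf_left a hs.1
    · intro u hu
      have hax : a ⊓ x ∈ M := (isNormalIdeal_ul _).1 inf_le_right hx
      refine key (a ⊓ x) hax ?_
      rintro t ⟨ht1, ht2⟩
      have htS : t ∈ Set.Iic x ∩ ⋃₀ T := ⟨le_trans ht1 inf_le_right, ht2⟩
      have h4 : a ⊓ t ≤ u := hu ⟨t, htS, rfl⟩
      exact le_trans (le_inf (le_trans ht1 inf_le_left) le_rfl) h4
  have : J = M := subset_antisymm hJM hMJ
  rw [this]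
  exact isNormalIdeal_ul _

lemma kappaJD_of_closed {κ : Cardinal}
    (h : ∀ T : Set (Set A), T ⊆ {N | IsNormalIdeal N} → Cardinal.mk T < κ →
      ∀ J : Set A, IsBLJoin T J → J ∈ {N : Set A | IsNormalIdeal N}) :
    IsKappaJD (DM A) κ := by
  intro S hcard x hx
  set T := Subtype.val '' S with hTdef
  have hT : T ⊆ {N | IsNormalIdeal N} := by
    rintro _ ⟨N, _, rfl⟩
    exact N.2
  have hcardT : Cardinal.mk T < κ := lt_of_le_of_lt Cardinal.mk_image_le hcard
  obtain ⟨J, hJ⟩ := exists_isBLJoin T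
  have hJN : IsNormalIdeal J := h T hT hcardT J hJ
  have hJx : J = x.val := by
    apply subset_antisymm
    · refine hJ.2.2 x.val x.2.isDIdeal ?_
      rintro y ⟨_, ⟨N, hN, rfl⟩, hy⟩
      exact hx.1 hN hy
    · have : x ≤ ⟨J, hJN⟩ := hx.2 (fun N hN y hy => hJ.2.1 ⟨N.val, ⟨N, hN, rfl⟩, hy⟩)
      exact this
  refine ⟨hx, fun a => ⟨?_, ?_⟩⟩
  · rintro _ ⟨s, hs, rfl⟩
    exact inf_le_inf_left a (hx.1 hs)
  · intro b hb
    intro y hy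
    have hsub : ∀ N ∈ T, a.val ∩ N ⊆ b.val := by
      rintro _ ⟨s, hs, rfl⟩
      exact hb ⟨s, hs, rfl⟩
    have h2 := blJoin_inf a.2.isDIdeal (fun N hN => (hT hN).1) hJ b.2.isDIdeal hsub
    exact h2 ⟨hy.1, hJx ▸ hy.2⟩

end Aux

/-- For a meet-semilattice `A` and an infinite regular cardinal `κ`,
the following are equivalent: (1) the complete lattice `DM A` is κJD; (2) `DM A` is
a κ-frame; (3) `BL_κ(DM A) = DM A`, i.e. the set of normal ideals of `A` is the
sub-κ-frame of `BL A` generated by the normal ideals (equivalently, it is closed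
under κ-joins computed in `BL A`). -/
theorem DM_kappaJD_tfae (A : Type*) [SemilatticeInf A] [OrderTop A]
    (κ : Cardinal) (hκ : κ.IsRegular) :
    ((IsKappaJD (DM A) κ ↔ IsKappaFrame (DM A) κ) ∧
      (IsKappaFrame (DM A) κ ↔
        BLKappa κ {N : Set A | IsNormalIdeal N} = {N : Set A | IsNormalIdeal N})) := by
  have hGD : {N : Set A | IsNormalIdeal N} ⊆ {E : Set A | IsDIdeal E} :=
    fun N hN => hN.isDIdeal
  have hcomp : IsKappaComplete (DM A) κ := fun S _ => ⟨_, isLUB_DM S⟩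
  have hJDclosed : IsKappaJD (DM A) κ ↔ BLClosed κ {N : Set A | IsNormalIdeal N} := by
    constructor
    · intro h
      exact ⟨isNormalIdeal_univ, fun E hE F hF => isNormalIdeal_inter hE hF,
        fun T hT hc J hJ => blJoin_normal_of_kappaJD h hT hc hJ⟩
    · intro h
      exact kappaJD_of_closed h.2.2
  have hframe : IsKappaFrame (DM A) κ ↔ IsKappaJD (DM A) κ :=
    ⟨fun h => h.2, fun h => ⟨hcomp, h⟩⟩
  refine ⟨⟨fun h => ⟨hcomp, h⟩, fun h => h.2⟩, ?_⟩
  rw [hframe, hJDclosed]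
  constructor
  · intro hG
    apply subset_antisymm
    · exact Set.sInter_subset_of_mem ⟨subset_rfl, hGD, hG⟩
    · intro N hN
      exact Set.mem_sInter.2 fun C hC => hC.1 hN
  · intro hEq
    have hBL : BLClosed κ (BLKappa κ {N : Set A | IsNormalIdeal N}) := by
      refine ⟨?_, ?_, ?_⟩
      · exact Set.mem_sInter.2 fun C hC => hC.2.2.1
      · intro E hE F hF
        exact Set.mem_sInter.2 fun C hC =>
          hC.2.2.2.1 E (Set.mem_sInter.1 hE C hC) F (Set.mem_sInter.1 hF C hC)
      · intro T hT hc J hJ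
        exact Set.mem_sInter.2 fun C hC =>
          hC.2.2.2.2 T (fun N hN => Set.mem_sInter.1 (hT hN) C hC) hc J hJ
    rwa [hEq] at hBL
end

section
/- Let A be a complete lattice (viewed as a meet-semilattice) and κ an infinite regular cardinal. Then A is κ-proHeyting, i.e., BL_κ(DM A) = DM A, if and only if A is a κ-frame. -/
open Cardinal

section Aux

variable {A : Type*} [SemilatticeInf A]

lemma dIdeal_Iic {A : Type*} [Lattice A] (a : A) : IsDIdeal (Set.Iic a) := by
  refine ⟨fun x y hyx hx => le_trans hyx hx, fun S hS x hx => hx.1.2 hS⟩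

lemma dIdeal_univ : IsDIdeal (Set.univ : Set A) :=
  ⟨fun _ _ _ _ => trivial, fun _ _ _ _ => trivial⟩

lemma dIdeal_relAnn (a b : A) : IsDIdeal (RelAnn a b) := by
  constructor
  · intro x y hyx hx
    exact le_trans (inf_le_inf_left a hyx) hx
  · intro S hS x hx
    exact (hx.2 a).2 (by rintro z ⟨s, hs, rfl⟩; exact hS hs)

lemma normal_iff_Iic {A : Type*} [CompleteLattice A] (N : Set A) :
    IsNormalIdeal N ↔ ∃ a : A, N = Set.Iic a := by
  constructor
  · rintro ⟨-, hN⟩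
    refine ⟨sInf (upperBounds N), ?_⟩
    ext x
    constructor
    · intro hx; exact le_sInf fun b hb => hb hx
    · intro hx
      rw [hN]
      exact fun b hb => hx.trans (sInf_le hb)
  · rintro ⟨a, rfl⟩
    exact ⟨fun x y hyx hx => le_trans hyx hx, by rw [upperBounds_Iic, lowerBounds_Ici]⟩

lemma normal_Iic {A : Type*} [CompleteLattice A] (a : A) : IsNormalIdeal (Set.Iic a) :=
  (normal_iff_Iic _).2 ⟨a, rfl⟩

end Aux


/-- A complete lattice `A` is κ-proHeyting, i.e.
`BL_κ(DM A) = DM A`, iff `A` is a κ-frame. -/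
theorem complete_kappaProHeyting_iff_kappaFrame (A : Type*) [CompleteLattice A]
    (κ : Cardinal) (hκ : κ.IsRegular) :
    BLKappa κ {N : Set A | IsNormalIdeal N} = {N : Set A | IsNormalIdeal N} ↔
      IsKappaFrame A κ := by
  set G : Set (Set A) := {N : Set A | IsNormalIdeal N} with hGdef
  constructor
  · -- κ-proHeyting → κ-frame
    intro h
    refine ⟨fun S _ => ⟨sSup S, isLUB_sSup S⟩, ?_⟩
    intro S hScard x hx
    refine ⟨hx, fun a => ?_⟩
    -- the BL join of the principal ideals of S
    set T : Set (Set A) := Set.Iic '' S with hTdef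
    set J : Set A := ⋂₀ {E : Set A | IsDIdeal E ∧ ⋃₀ T ⊆ E} with hJdef
    have hJD : IsDIdeal J := by
      constructor
      · intro u v hvu hu E hE
        exact hE.1.1 hvu (hu E hE)
      · intro S' hS' z hz E hE
        exact hE.1.2 S' (fun s hs => hS' hs E hE) z hz
    have hJ : IsBLJoin T J := by
      refine ⟨hJD, fun y hy E hE => hE.2 hy, fun E hE hTE u hu => hu E ⟨hE, hTE⟩⟩
    have hJG : J ∈ G := by
      rw [← h]
      intro C hC
      refine hC.2.2.2.2 T (fun N hN => ?_) ?_ J hJ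
      · obtain ⟨s, -, rfl⟩ := hN
        exact hC.1 (normal_Iic s)
      · exact lt_of_le_of_lt Cardinal.mk_image_le hScard
    obtain ⟨c, hc⟩ := (normal_iff_Iic J).1 hJG
    -- J = Iic x
    have hSJ : S ⊆ J := fun s hs =>
      hJ.2.1 (Set.mem_sUnion.2 ⟨Set.Iic s, ⟨s, hs, rfl⟩, le_refl s⟩)
    have hJx : J ⊆ Set.Iic x := by
      refine hJ.2.2 _ (dIdeal_Iic x) ?_
      rintro y ⟨E, ⟨s, hs, rfl⟩, hy⟩
      exact le_trans hy (hx.1 hs)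
    have hcx : c = x := by
      refine le_antisymm (hJx (hc ▸ Set.mem_Iic.2 (le_refl c))) (hx.2 fun s hs => ?_)
      have := hSJ hs
      rw [hc] at this
      exact this
    have hxJ : x ∈ J := by rw [hc, hcx]; exact Set.mem_Iic.2 le_rfl
    constructor
    · rintro z ⟨s, hs, rfl⟩
      exact inf_le_inf_left a (hx.1 hs)
    · intro b hb
      have hJR : J ⊆ RelAnn a b := by
        refine hJ.2.2 _ (dIdeal_relAnn a b) ?_
        rintro y ⟨E, ⟨s, hs, rfl⟩, hy⟩
        exact le_trans (inf_le_inf_left a hy) (hb ⟨s, hs, rfl⟩)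
      exact hJR hxJ
  · -- κ-frame → κ-proHeyting
    intro hF
    apply Set.Subset.antisymm
    · -- BLKappa ⊆ G : G itself belongs to the collection
      intro E hE
      refine hE G ⟨le_refl G, fun N hN => ?_, ?_, ?_, ?_⟩
      · obtain ⟨a, rfl⟩ := (normal_iff_Iic N).1 hN
        exact dIdeal_Iic a
      · have : (Set.univ : Set A) = Set.Iic ⊤ := by ext y; simp
        exact this ▸ normal_Iic ⊤
      · intro E hE F hF
        obtain ⟨a, rfl⟩ := (normal_iff_Iic E).1 hE
        obtain ⟨b, rfl⟩ := (normal_iff_Iic F).1 hF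
        rw [Set.Iic_inter_Iic]
        exact normal_Iic _
      · intro T hTG hTcard J hJ
        set f : Set A → A := fun N => sInf (upperBounds N) with hfdef
        have hf : ∀ N ∈ T, N = Set.Iic (f N) := by
          intro N hN
          obtain ⟨a, rfl⟩ := (normal_iff_Iic N).1 (hTG hN)
          rw [hfdef]
          simp only
          rw [upperBounds_Iic, csInf_Ici]
        set S : Set A := f '' T with hSdef
        set x : A := sSup S with hxdef
        have hdist : IsDistJoin S x :=
          hF.2 S (lt_of_le_of_lt Cardinal.mk_image_le hTcard) x (isLUB_sSup S)
        have hSJ : S ⊆ J := by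
          rintro s ⟨N, hN, rfl⟩
          exact hJ.2.1 ⟨N, hN, (hf N hN).superset (Set.mem_Iic.2 le_rfl)⟩
        have hxJ : x ∈ J := hJ.1.2 S hSJ x hdist
        have hJx : J ⊆ Set.Iic x := by
          refine hJ.2.2 _ (dIdeal_Iic x) ?_
          rintro y ⟨N, hN, hy⟩
          have : y ≤ f N := (hf N hN).subset hy
          exact le_trans this (hdist.1.1 ⟨N, hN, rfl⟩)
        have : J = Set.Iic x := Set.Subset.antisymm hJx (fun y hy => hJ.1.1 hy hxJ)
        exact this ▸ normal_Iic x
    · -- G ⊆ BLKappa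
      intro N hN C hC
      exact hC.1 hN
end

section
/- Let A be a bounded distributive lattice and κ an infinite regular cardinal. Then BL_κ(pH A) = {↓a : a ∈ A} (the sub-κ-frame of BL A generated by the proHeyting extension pH A consists exactly of the principal D-ideals) if and only if A is a κ-complete Heyting lattice. -/
open Cardinal

/-- The closure conditions defining the proHeyting extension inside `BL A`:
containing every relative annihilator, the top and bottom of `BL A`, and closed
under binary meets (intersections) and binary joins of `BL A`. -/
def PHClosed {A : Type*} [SemilatticeInf A] (C : Set (Set A)) : Prop :=
  (∀ a b : A, RelAnn a b ∈ C) ∧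
  Set.univ ∈ C ∧
  (∀ J : Set A, IsBLJoin (∅ : Set (Set A)) J → J ∈ C) ∧
  (∀ E ∈ C, ∀ F ∈ C, E ∩ F ∈ C) ∧
  (∀ E ∈ C, ∀ F ∈ C, ∀ J : Set A, IsBLJoin {E, F} J → J ∈ C)

/-- The proHeyting extension `pH A`: the bounded sublattice of `BL A` generated by
the relative annihilators of `A`. -/
def pHExt (A : Type*) [SemilatticeInf A] : Set (Set A) :=
  ⋂₀ {C : Set (Set A) | C ⊆ {E : Set A | IsDIdeal E} ∧ PHClosed C}

theorem pHExt_inter_mem {A : Type*} [SemilatticeInf A] :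
    ∀ E ∈ pHExt A, ∀ F ∈ pHExt A, E ∩ F ∈ pHExt A := by
  intro E hE F hF
  rw [pHExt, Set.mem_sInter] at hE hF ⊢
  intro C hC
  exact hC.2.2.2.2.1 E (hE C hC) F (hF C hC)

/-- `pH A` with its inherited order is a meet-semilattice. -/
instance pHExtSemilatticeInf (A : Type*) [SemilatticeInf A] :
    SemilatticeInf ↥(pHExt A) :=
  subSemilatticeInf (pHExt A) pHExt_inter_mem

section AuxLemmas

variable {A : Type*}

lemma isDIdeal_Iic [SemilatticeInf A] (a : A) : IsDIdeal (Set.Iic a) :=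
  ⟨fun _ _ hxy hx => le_trans hxy hx, fun _ hS _ hx => hx.1.2 hS⟩

/-- The least D-ideal containing `⋃₀ T`. -/
def BLjoin [SemilatticeInf A] (T : Set (Set A)) : Set A :=
  ⋂₀ {E : Set A | IsDIdeal E ∧ ⋃₀ T ⊆ E}

lemma isBLJoin_BLjoin [SemilatticeInf A] (T : Set (Set A)) : IsBLJoin T (BLjoin T) := by
  refine ⟨⟨?_, ?_⟩, ?_, ?_⟩
  · intro x y hxy hx
    rw [BLjoin, Set.mem_sInter] at hx ⊢
    intro E hE
    exact hE.1.1 hxy (hx E hE)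
  · intro S hS x hx
    rw [BLjoin, Set.mem_sInter]
    intro E hE
    exact hE.1.2 S (fun s hs => by
      have := hS hs; rw [BLjoin, Set.mem_sInter] at this; exact this E hE) x hx
  · intro s hs
    rw [BLjoin, Set.mem_sInter]
    intro E hE
    exact hE.2 hs
  · intro E hE hTE x hx
    rw [BLjoin, Set.mem_sInter] at hx
    exact hx E ⟨hE, hTE⟩

lemma relAnn_mem_pHExt [SemilatticeInf A] (a b : A) : RelAnn a b ∈ pHExt A :=
  Set.mem_sInter.mpr fun _ hC => hC.2.1 a b

lemma Iic_mem_pHExt [SemilatticeInf A] [OrderTop A] (a : A) : Set.Iic a ∈ pHExt A := by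
  have h : Set.Iic a = RelAnn ⊤ a := by ext x; simp [RelAnn]
  rw [h]; exact relAnn_mem_pHExt ⊤ a

lemma pHExt_subset_BLKappa [SemilatticeInf A] (κ : Cardinal) :
    pHExt A ⊆ BLKappa κ (pHExt A) := fun _ hx =>
  Set.mem_sInter.mpr fun _ hC => hC.1 hx

lemma BLClosed_BLKappa [SemilatticeInf A] (κ : Cardinal) (G : Set (Set A)) :
    BLClosed κ (BLKappa κ G) := by
  refine ⟨?_, ?_, ?_⟩
  · exact Set.mem_sInter.mpr fun _ hC => hC.2.2.1
  · intro E hE F hF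
    exact Set.mem_sInter.mpr fun C hC =>
      hC.2.2.2.1 E (Set.mem_sInter.mp hE C hC) F (Set.mem_sInter.mp hF C hC)
  · intro T hT hTκ J hJ
    exact Set.mem_sInter.mpr fun C hC =>
      hC.2.2.2.2 T (fun E hE => Set.mem_sInter.mp (hT hE) C hC) hTκ J hJ

lemma isDistJoin_empty [SemilatticeInf A] [OrderBot A] : IsDistJoin (∅ : Set A) ⊥ := by
  refine ⟨isLUB_empty, fun a => ?_⟩
  rw [Set.image_empty, inf_bot_eq]
  exact isLUB_empty

lemma isDistJoin_of_himp [SemilatticeInf A] (f : A → A → A)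
    (hf : ∀ a b c : A, c ⊓ a ≤ b ↔ c ≤ f a b)
    {S : Set A} {x : A} (hx : IsLUB S x) : IsDistJoin S x := by
  refine ⟨hx, fun c => ⟨?_, ?_⟩⟩
  · rintro _ ⟨s, hs, rfl⟩
    exact inf_le_inf_left c (hx.1 hs)
  · intro u hu
    have h1 : x ≤ f c u := hx.2 fun s hs =>
      (hf c u s).1 (by rw [inf_comm]; exact hu (Set.mem_image_of_mem _ hs))
    have h2 := (hf c u x).2 h1
    rwa [inf_comm] at h2

end AuxLemmas

/-- For a bounded distributive lattice `A` and an infinite regular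
cardinal `κ`: the sub-κ-frame of `BL A` generated by the proHeyting extension `pH A`
consists exactly of the principal D-ideals, `BL_κ(pH A) = {↓a : a ∈ A}`, iff `A` is
a κ-complete Heyting lattice. -/
theorem BLKappa_pH_eq_principal_iff (A : Type*) [DistribLattice A] [BoundedOrder A]
    (κ : Cardinal) (hκ : κ.IsRegular) :
    BLKappa κ (pHExt A) = Set.range (Set.Iic : A → Set A) ↔
      ((∃ himp : A → A → A, ∀ a b c : A, c ⊓ a ≤ b ↔ c ≤ himp a b) ∧
        IsKappaComplete A κ) := by
  constructor
  · intro hEq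
    constructor
    · -- Heyting
      have hmem : ∀ a b : A, ∃ c, Set.Iic c = RelAnn a b := by
        intro a b
        have h : RelAnn a b ∈ BLKappa κ (pHExt A) :=
          pHExt_subset_BLKappa κ (relAnn_mem_pHExt a b)
        rw [hEq] at h
        exact h
      choose f hf using hmem
      refine ⟨f, fun a b c => ?_⟩
      have h : c ∈ Set.Iic (f a b) ↔ c ∈ RelAnn a b := by rw [hf]
      simp only [Set.mem_Iic, RelAnn, Set.mem_setOf_eq] at h
      rw [inf_comm c a]
      exact h.symm
    · -- κ-complete
      intro S hS
      set T := Set.Iic '' S with hT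
      have hTκ : #T < κ := lt_of_le_of_lt Cardinal.mk_image_le hS
      have hTsub : T ⊆ BLKappa κ (pHExt A) := by
        rintro _ ⟨a, _, rfl⟩
        exact pHExt_subset_BLKappa κ (Iic_mem_pHExt a)
      have hJ : BLjoin T ∈ BLKappa κ (pHExt A) :=
        (BLClosed_BLKappa κ (pHExt A)).2.2 T hTsub hTκ _ (isBLJoin_BLjoin T)
      rw [hEq] at hJ
      obtain ⟨x, hx⟩ := hJ
      refine ⟨x, ?_, ?_⟩
      · intro a ha
        have h : a ∈ BLjoin T :=
          (isBLJoin_BLjoin T).2.1 ⟨Set.Iic a, ⟨a, ha, rfl⟩, le_refl a⟩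
        rw [← hx] at h
        exact h
      · intro u hu
        have hsub : BLjoin T ⊆ Set.Iic u := by
          refine (isBLJoin_BLjoin T).2.2 _ (isDIdeal_Iic u) ?_
          rintro y ⟨_, ⟨a, ha, rfl⟩, hy⟩
          exact le_trans hy (hu ha)
        have hxJ : x ∈ BLjoin T := by rw [← hx]; exact le_refl x
        exact hsub hxJ
  · rintro ⟨⟨f, hf⟩, hcomp⟩
    have hDsub : Set.range (Set.Iic : A → Set A) ⊆ {E : Set A | IsDIdeal E} := by
      rintro _ ⟨a, rfl⟩
      exact isDIdeal_Iic a
    have hmeets : ∀ E ∈ Set.range (Set.Iic : A → Set A),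
        ∀ F ∈ Set.range (Set.Iic : A → Set A),
          E ∩ F ∈ Set.range (Set.Iic : A → Set A) := by
      rintro _ ⟨a, rfl⟩ _ ⟨b, rfl⟩
      exact ⟨a ⊓ b, (Set.Iic_inter_Iic).symm⟩
    have hpH : PHClosed (Set.range (Set.Iic : A → Set A)) := by
      refine ⟨?_, ⟨⊤, Set.Iic_top⟩, ?_, hmeets, ?_⟩
      · intro a b
        refine ⟨f a b, ?_⟩
        ext x
        simp only [Set.mem_Iic, RelAnn, Set.mem_setOf_eq]
        rw [inf_comm a x]
        exact (hf a b x).symm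
      · intro J hJ
        have hb : (⊥ : A) ∈ J := hJ.1.2 ∅ (Set.empty_subset J) ⊥ isDistJoin_empty
        refine ⟨⊥, subset_antisymm (fun y hy => hJ.1.1 hy hb)
          (hJ.2.2 _ (isDIdeal_Iic ⊥) (by simp))⟩
      · rintro _ ⟨a, rfl⟩ _ ⟨b, rfl⟩ J hJ
        have hab : a ⊔ b ∈ J := by
          refine hJ.1.2 {a, b} ?_ (a ⊔ b) (isDistJoin_of_himp f hf isLUB_pair)
          intro s hs
          rcases hs with rfl | rfl
          · exact hJ.2.1 ⟨Set.Iic s, Or.inl rfl, le_refl s⟩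
          · exact hJ.2.1 ⟨Set.Iic s, Or.inr rfl, le_refl s⟩
        refine ⟨a ⊔ b, subset_antisymm (fun y hy => hJ.1.1 hy hab) ?_⟩
        refine hJ.2.2 _ (isDIdeal_Iic (a ⊔ b)) ?_
        rintro y ⟨E, hE, hy⟩
        rcases hE with rfl | rfl
        · exact le_trans hy le_sup_left
        · exact le_trans hy le_sup_right
    have hcl : BLClosed κ (Set.range (Set.Iic : A → Set A)) := by
      refine ⟨⟨⊤, Set.Iic_top⟩, hmeets, ?_⟩
      intro T hT hTκ J hJ
      set S : Set A := {a : A | Set.Iic a ∈ T} with hSdef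
      have hST : Set.Iic '' S = T := by
        apply subset_antisymm
        · rintro _ ⟨a, ha, rfl⟩; exact ha
        · intro E hE
          obtain ⟨a, rfl⟩ := hT hE
          exact ⟨a, hE, rfl⟩
      have hSκ : #S < κ := by
        refine lt_of_le_of_lt ?_ hTκ
        rw [← hST, Cardinal.mk_image_eq Set.Iic_injective]
      obtain ⟨x, hx⟩ := hcomp S hSκ
      have hxJ : x ∈ J := by
        refine hJ.1.2 S ?_ x (isDistJoin_of_himp f hf hx)
        intro a ha
        exact hJ.2.1 ⟨Set.Iic a, ha, le_refl a⟩
      refine ⟨x, subset_antisymm (fun y hy => hJ.1.1 hy hxJ) ?_⟩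
      refine hJ.2.2 _ (isDIdeal_Iic x) ?_
      rintro y ⟨E, hE, hy⟩
      obtain ⟨a, rfl⟩ := hT hE
      exact le_trans hy (hx.1 hE)
    have hpHsub : pHExt A ⊆ Set.range (Set.Iic : A → Set A) := fun E hE =>
      Set.mem_sInter.mp hE _ ⟨hDsub, hpH⟩
    apply subset_antisymm
    · intro E hE
      exact Set.mem_sInter.mp hE _ ⟨hpHsub, hDsub, hcl⟩
    · rintro _ ⟨a, rfl⟩
      exact pHExt_subset_BLKappa κ (Iic_mem_pHExt a)
end

section
/- Let X be a Priestley space and κ an infinite regular cardinal. Then ClopUp(X) is κJD — i.e., whenever a family 𝒮 of fewer than κ clopen upsets of X has a supremum J in ClopUp(X), for every clopen upset V the set V ∩ J is the supremum in ClopUp(X) of {V ∩ U : U ∈ 𝒮} — if and only if for every κ-clopen upset U of X, if ↑cl(U) is clopen then ↑cl(U) = cl(U). -/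
open Cardinal

section PriestleyDefs

variable {X : Type*} [TopologicalSpace X] [Preorder X]

/-- The upward closure `↑S` of a set. -/
def upSet (S : Set X) : Set X := {x : X | ∃ y ∈ S, y ≤ x}

/-- The downward closure `↓S` of a set. -/
def downSet (S : Set X) : Set X := {x : X | ∃ y ∈ S, x ≤ y}

/-- `cl₂(S) = ↑cl(S)`, the closure in the topology of open downsets. -/
def cl2 (S : Set X) : Set X := upSet (closure S)

/-- `int₁(S) = X \ ↓(X \ int(S))`, the interior in the topology of open upsets. -/
def int1 (S : Set X) : Set X := (downSet ((interior S)ᶜ))ᶜ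

/-- A Dedekind–MacNeille set: an open upset `U` with `int₁(cl₂(U)) = U`. -/
def IsDMSet (U : Set X) : Prop := IsOpen U ∧ IsUpperSet U ∧ int1 (cl2 U) = U

/-- A clopen upset. -/
def IsClopenUpset (U : Set X) : Prop := IsClopen U ∧ IsUpperSet U

/-- A κ-clopen upset: a union of fewer than `κ` clopen upsets. -/
def IsKappaClopenUpset (κ : Cardinal) (U : Set X) : Prop :=
  ∃ 𝒮 : Set (Set X), (∀ W ∈ 𝒮, IsClopenUpset W) ∧ #𝒮 < κ ∧ U = ⋃₀ 𝒮

end PriestleyDefs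

section Aux

variable {X : Type*} [TopologicalSpace X] [Preorder X]

lemma isUpperSet_upSet (S : Set X) : IsUpperSet (upSet S) := by
  rintro a b hab ⟨y, hy, hya⟩
  exact ⟨y, hy, hya.trans hab⟩

lemma subset_cl2 (S : Set X) : closure S ⊆ cl2 S := fun x hx => ⟨x, hx, le_refl x⟩

lemma cl2_subset {S K : Set X} (hK : IsClopenUpset K) (hSK : S ⊆ K) : cl2 S ⊆ K := by
  rintro x ⟨y, hy, hyx⟩
  exact hK.2 hyx (hK.1.isClosed.closure_subset_iff.2 hSK hy)

lemma exists_clopen_upset_superset [CompactSpace X] [PriestleySpace X]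
    {C : Set X} (hC : IsClosed C) {x : X} (hx : x ∉ upSet C) :
    ∃ K : Set X, IsClopenUpset K ∧ C ⊆ K ∧ x ∉ K := by
  have h : ∀ y : C, ∃ U : Set X, IsClopen U ∧ IsUpperSet U ∧ (y : X) ∈ U ∧ x ∉ U := by
    intro y
    exact PriestleySpace.priestley (fun hle => hx ⟨y, y.2, hle⟩)
  choose U hUc hUu hUy hUx using h
  obtain ⟨t, ht⟩ := hC.isCompact.elim_finite_subcover U (fun y => (hUc y).isOpen)
    (fun z hz => Set.mem_iUnion.2 ⟨⟨z, hz⟩, hUy ⟨z, hz⟩⟩)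
  refine ⟨⋃ y ∈ t, U y, ⟨?_, ?_⟩, ht, ?_⟩
  · exact isClopen_biUnion_finset (fun y _ => hUc y)
  · exact isUpperSet_iUnion₂ (fun y _ => hUu y)
  · intro hmem
    simp only [Set.mem_iUnion] at hmem
    obtain ⟨y, _, hy⟩ := hmem
    exact hUx y hy

lemma exists_clopen_upset_disjoint [CompactSpace X] [PriestleySpace X]
    {Z : Set X} (hZ : IsClosed Z) {x : X} (hx : ∀ z ∈ Z, ¬ x ≤ z) :
    ∃ V : Set X, IsClopenUpset V ∧ x ∈ V ∧ V ∩ Z = ∅ := by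
  have h : ∀ z : Z, ∃ U : Set X, IsClopen U ∧ IsUpperSet U ∧ x ∈ U ∧ (z : X) ∉ U :=
    fun z => PriestleySpace.priestley (hx z z.2)
  choose U hUc hUu hUx hUz using h
  obtain ⟨t, ht⟩ := hZ.isCompact.elim_finite_subcover (fun z => (U z)ᶜ)
    (fun z => (hUc z).isClosed.isOpen_compl)
    (fun w hw => Set.mem_iUnion.2 ⟨⟨w, hw⟩, hUz ⟨w, hw⟩⟩)
  refine ⟨⋂ z ∈ t, U z, ⟨?_, ?_⟩, ?_, ?_⟩
  · exact isClopen_biInter_finset (fun z _ => hUc z)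
  · exact isUpperSet_iInter₂ (fun z _ => hUu z)
  · exact Set.mem_iInter₂.2 fun z _ => hUx z
  · ext w
    simp only [Set.mem_inter_iff, Set.mem_iInter, Set.mem_empty_iff_false, iff_false, not_and]
    intro hwV hwZ
    have := ht hwZ
    simp only [Set.mem_iUnion] at this
    obtain ⟨z, hzt, hzc⟩ := this
    exact hzc (hwV z hzt)

end Aux


/-- Let `X` be a Priestley space and `κ` an infinite regular
cardinal. Then `ClopUp(X)` is κJD — whenever a family `𝒮` of fewer than `κ` clopen
upsets has a supremum `J` in `ClopUp(X)`, for every clopen upset `V` the set `V ∩ J`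
is the supremum in `ClopUp(X)` of `{V ∩ U : U ∈ 𝒮}` — iff for every κ-clopen upset
`U` of `X`, if `↑cl(U)` is clopen then `↑cl(U) = cl(U)`. -/
theorem clopUp_kappaJD_iff (X : Type*) [TopologicalSpace X] [PartialOrder X]
    [CompactSpace X] [PriestleySpace X] (κ : Cardinal) (hκ : κ.IsRegular) :
    (∀ 𝒮 : Set (Set X), (∀ U ∈ 𝒮, IsClopenUpset U) → #𝒮 < κ →
      ∀ J : Set X, IsClopenUpset J → (∀ U ∈ 𝒮, U ⊆ J) →
        (∀ K : Set X, IsClopenUpset K → (∀ U ∈ 𝒮, U ⊆ K) → J ⊆ K) →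
        ∀ V : Set X, IsClopenUpset V →
          IsClopenUpset (V ∩ J) ∧ (∀ U ∈ 𝒮, V ∩ U ⊆ V ∩ J) ∧
            ∀ K : Set X, IsClopenUpset K → (∀ U ∈ 𝒮, V ∩ U ⊆ K) → V ∩ J ⊆ K) ↔
      (∀ U : Set X, IsKappaClopenUpset κ U → IsClopen (cl2 U) → cl2 U = closure U) := by
  constructor
  · -- κJD implies the closure condition
    intro hJD U hU hclopen
    obtain ⟨𝒮, h𝒮, hcard, rfl⟩ := hU
    apply Set.Subset.antisymm _ (subset_cl2 _)
    intro x hx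
    by_contra hxcl
    have hdown : IsOpen {z : X | ¬ z ≤ x} := by
      rw [isOpen_iff_forall_mem_open]
      intro z hz
      obtain ⟨W, hWc, hWu, hzW, hxW⟩ := PriestleySpace.priestley hz
      exact ⟨W, fun w hw hwx => hxW (hWu hwx hw), hWc.isOpen, hzW⟩
    have hZclosed : IsClosed ({z : X | z ≤ x} ∩ closure (⋃₀ 𝒮)) := by
      apply IsClosed.inter _ isClosed_closure
      have h : {z : X | z ≤ x} = {z : X | ¬ z ≤ x}ᶜ := by ext z; simp
      rw [h]
      exact hdown.isClosed_compl
    have hZx : ∀ z ∈ {z : X | z ≤ x} ∩ closure (⋃₀ 𝒮), ¬ x ≤ z := by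
      rintro z ⟨hzx, hzcl⟩ hxz
      obtain rfl := le_antisymm hxz hzx
      exact hxcl hzcl
    obtain ⟨V, hV, hxV, hVZ⟩ := exists_clopen_upset_disjoint hZclosed hZx
    have hxC : x ∉ upSet (closure (V ∩ ⋃₀ 𝒮)) := by
      rintro ⟨y, hy, hyx⟩
      have hyV : y ∈ V := closure_minimal Set.inter_subset_left hV.1.isClosed hy
      have hycl : y ∈ closure (⋃₀ 𝒮) := closure_mono Set.inter_subset_right hy
      exact Set.eq_empty_iff_forall_notMem.1 hVZ y ⟨hyV, hyx, hycl⟩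
    obtain ⟨K, hK, hCK, hxK⟩ := exists_clopen_upset_superset isClosed_closure hxC
    have hJ : IsClopenUpset (cl2 (⋃₀ 𝒮)) := ⟨hclopen, isUpperSet_upSet _⟩
    have hub : ∀ W ∈ 𝒮, W ⊆ cl2 (⋃₀ 𝒮) := fun W hW w hw =>
      subset_cl2 _ (subset_closure (Set.subset_sUnion_of_mem hW hw))
    have hlub : ∀ K' : Set X, IsClopenUpset K' → (∀ W ∈ 𝒮, W ⊆ K') → cl2 (⋃₀ 𝒮) ⊆ K' :=
      fun K' hK' h => cl2_subset hK' (Set.sUnion_subset h)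
    obtain ⟨-, -, hleast⟩ := hJD 𝒮 h𝒮 hcard _ hJ hub hlub V hV
    have hsub : V ∩ cl2 (⋃₀ 𝒮) ⊆ K := by
      apply hleast K hK
      intro W hW
      exact ((Set.inter_subset_inter_right V (Set.subset_sUnion_of_mem hW)).trans
        (subset_closure.trans hCK))
    exact hxK (hsub ⟨hxV, hx⟩)
  · -- closure condition implies κJD
    intro hcond 𝒮 h𝒮 hcard J hJ hub hlub V hV
    have hUsub : ⋃₀ 𝒮 ⊆ J := Set.sUnion_subset hub
    have hJsub : J ⊆ cl2 (⋃₀ 𝒮) := by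
      intro x hxJ
      by_contra hxc
      obtain ⟨K, hK, hCK, hxK⟩ := exists_clopen_upset_superset isClosed_closure hxc
      exact hxK (hlub K hK (fun W hW w hw =>
        hCK (subset_closure (Set.subset_sUnion_of_mem hW hw))) hxJ)
    have hJeq : J = cl2 (⋃₀ 𝒮) := Set.Subset.antisymm hJsub (cl2_subset hJ hUsub)
    have hJcl : J = closure (⋃₀ 𝒮) := by
      rw [hJeq]
      exact hcond _ ⟨𝒮, h𝒮, hcard, rfl⟩ (hJeq ▸ hJ.1)
    refine ⟨⟨hV.1.inter hJ.1, hV.2.inter hJ.2⟩,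
      fun W hW => Set.inter_subset_inter_right V (hub W hW), ?_⟩
    intro K hK hKub
    have h1 : V ∩ ⋃₀ 𝒮 ⊆ K := by
      rintro w ⟨hwV, S, hS, hwS⟩
      exact hKub S hS ⟨hwV, hwS⟩
    calc V ∩ J = V ∩ closure (⋃₀ 𝒮) := by rw [hJcl]
      _ ⊆ closure (V ∩ ⋃₀ 𝒮) := hV.1.isOpen.inter_closure
      _ ⊆ K := hK.1.isClosed.closure_subset_iff.2 h1
end
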